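/- arXiv:1404.4839 — 3 statements merged into one kernel-verified Lean document; each statement's English description precedes it below -/
import Mathlib

section
/- Let L = S + (1/(2k4))(η1 - η1d)² + (1/(2k5))(ω - ωd)² with time-varying gain k5 > 0. Under the control law u1 = η1d' - k4ξ̄1 - k6(η1 - η1d) and ū2 = ωd' + (k5/k2)·(e2ᵀRᵀξr')/|ξr'| + (k5'/(2k5) - k7)(ω - ωd), together with η1' = u1 and ω' = ū2, the derivative of L equals L̇ = -k1ξ̄1² - (k3/k2)(e2ᵀRᵀξr')² - (k6/k4)(η1 - η1d)² - (k7/k5)(ω - ωd)², which is nonpositive. -/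
open Matrix

/-- The 2x2 rotation matrix by angle θ. -/
noncomputable def Rmat (θ : ℝ) : Matrix (Fin 2) (Fin 2) ℝ :=
  !![Real.cos θ, -Real.sin θ; Real.sin θ, Real.cos θ]

/-- The matrix S = [[0,-1],[1,0]]. -/
def Smat : Matrix (Fin 2) (Fin 2) ℝ := !![0, -1; 1, 0]

/-- e1 = (1,0). -/
def e1 : Fin 2 → ℝ := ![1, 0]

/-- e2 = (0,1). -/
def e2 : Fin 2 → ℝ := ![0, 1]

/-- Euclidean norm on ℝ². -/
noncomputable def enorm2 (v : Fin 2 → ℝ) : ℝ := Real.sqrt (v 0 ^ 2 + v 1 ^ 2)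

/-- Euclidean dot product on ℝ². -/
def dot (a b : Fin 2 → ℝ) : ℝ := a 0 * b 0 + a 1 * b 1

/-!
Differentiate the four summands of `L` separately. By skew-symmetry of `S` the rotation does not
enter `d/dt ½|ξ̄|²`, and the cosine `e1ᵀRᵀξr'/|ξr'|` of the heading error has derivative
`(e2ᵀRᵀξr'/|ξr'|)(ω - ωr)`. Writing `η1 = (η1 - η1d) + η1d` and `ω = (ω - ωd) + ωd`, the virtual
controls `η1d`, `ωd` and the control laws `u1`, `ū2` are chosen exactly so that the cross terms
`ξ̄₁(η1 - η1d)`, `ξ̄₂ e2ᵀRᵀξr'` and `(ω - ωd) e2ᵀRᵀξr'/|ξr'|` cancel in pairs;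
the term `k5'/(2k5)` in `ū2` absorbs the variation of the weight `1/(2k5)`.
-/

lemma enorm2_sq (v : Fin 2 → ℝ) : enorm2 v ^ 2 = v 0 ^ 2 + v 1 ^ 2 :=
  Real.sq_sqrt (by positivity)

lemma dot_e1_rotT_mulVec (θ : ℝ) (v : Fin 2 → ℝ) :
    dot e1 ((Rmat θ)ᵀ *ᵥ v) = Real.cos θ * v 0 + Real.sin θ * v 1 := by
  simp [dot, e1, Rmat, mulVec, dotProduct, Fin.sum_univ_two]

lemma dot_e2_rotT_mulVec (θ : ℝ) (v : Fin 2 → ℝ) :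
    dot e2 ((Rmat θ)ᵀ *ᵥ v) = -Real.sin θ * v 0 + Real.cos θ * v 1 := by
  simp [dot, e2, Rmat, mulVec, dotProduct, Fin.sum_univ_two]

lemma dot_Smat_mulVec (a b : Fin 2 → ℝ) : dot a (Smat *ᵥ b) = a 1 * b 0 - a 0 * b 1 := by
  simp [dot, Smat, mulVec, dotProduct, Fin.sum_univ_two]; ring

/-- Skew-symmetry of `S`: the rotational term `-w S b` is orthogonal to `b`. -/
lemma dot_neg_smul_Smat_add_smul_e1_sub (b v : Fin 2 → ℝ) (w a : ℝ) :
    dot b (-w • Smat *ᵥ b + a • e1 - v) = b 0 * (a - dot e1 v) - b 1 * dot e2 v := by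
  simp [dot, Smat, e1, e2, dotProduct, Fin.sum_univ_two]; ring

section Derivatives

variable {t : ℝ}

lemma hasDerivAt_enorm2_sq {v : ℝ → Fin 2 → ℝ} {v' : Fin 2 → ℝ}
    (hv : HasDerivAt v v' t) :
    HasDerivAt (fun s => enorm2 (v s) ^ 2) (2 * dot (v t) v') t := by
  simp only [enorm2_sq]
  exact (((hasDerivAt_pi.mp hv 0).fun_pow 2).fun_add
    ((hasDerivAt_pi.mp hv 1).fun_pow 2)).congr_deriv (by simp [dot]; ring)

lemma hasDerivAt_enorm2 {v : ℝ → Fin 2 → ℝ} {v' : Fin 2 → ℝ}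
    (hv : HasDerivAt v v' t) (hv0 : enorm2 (v t) ≠ 0) :
    HasDerivAt (fun s => enorm2 (v s)) (dot (v t) v' / enorm2 (v t)) t := by
  have hsq := hasDerivAt_enorm2_sq hv
  simp only [enorm2_sq] at hsq
  have hpos : v t 0 ^ 2 + v t 1 ^ 2 ≠ 0 := by rw [← enorm2_sq]; positivity
  exact (hsq.sqrt hpos).congr_deriv (by rw [← enorm2]; field_simp)

lemma hasDerivAt_dot_e1_rotT_mulVec {θ : ℝ → ℝ} {v : ℝ → Fin 2 → ℝ} {w : ℝ}
    {v' : Fin 2 → ℝ} (hθ : HasDerivAt θ w t) (hv : HasDerivAt v v' t) :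
    HasDerivAt (fun s => dot e1 ((Rmat (θ s))ᵀ *ᵥ v s))
      (w * dot e2 ((Rmat (θ t))ᵀ *ᵥ v t) + dot e1 ((Rmat (θ t))ᵀ *ᵥ v')) t := by
  simp only [dot_e1_rotT_mulVec, dot_e2_rotT_mulVec]
  exact ((hθ.cos.fun_mul (hasDerivAt_pi.mp hv 0)).fun_add
    (hθ.sin.fun_mul (hasDerivAt_pi.mp hv 1))).congr_deriv (by ring)

/-- The cosine of the heading error relative to `v` varies at the rate
`sin(heading error) * (w - ωᵥ)`, where `ωᵥ = -⟨v, S v'⟩ / |v|²` is the turning rate of `v`. -/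
lemma hasDerivAt_dot_e1_rotT_mulVec_div_enorm2 {θ : ℝ → ℝ} {v : ℝ → Fin 2 → ℝ} {w : ℝ}
    {v' : Fin 2 → ℝ} (hθ : HasDerivAt θ w t) (hv : HasDerivAt v v' t)
    (hv0 : enorm2 (v t) ≠ 0) :
    HasDerivAt (fun s => dot e1 ((Rmat (θ s))ᵀ *ᵥ v s) / enorm2 (v s))
      (dot e2 ((Rmat (θ t))ᵀ *ᵥ v t) / enorm2 (v t) *
        (w + dot (v t) (Smat *ᵥ v') / enorm2 (v t) ^ 2)) t := by
  refine ((hasDerivAt_dot_e1_rotT_mulVec hθ hv).fun_div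
    (hasDerivAt_enorm2 hv hv0) hv0).congr_deriv ?_
  have hn := enorm2_sq (v t)
  simp only [dot_e1_rotT_mulVec, dot_e2_rotT_mulVec, dot_Smat_mulVec]
  simp only [dot]
  field_simp
  linear_combination (Real.cos (θ t) * v' 0 + Real.sin (θ t) * v' 1) * hn

lemma hasDerivAt_one_div_two_mul_mul_sq {k e : ℝ → ℝ} {k' e' : ℝ}
    (hk : HasDerivAt k k' t) (he : HasDerivAt e e' t) (hk0 : k t ≠ 0) :
    HasDerivAt (fun s => 1 / (2 * k s) * e s ^ 2)
      (e t / k t * (e' - k' / (2 * k t) * e t)) t := by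
  have h2k : 2 * k t ≠ 0 := mul_ne_zero two_ne_zero hk0
  exact (((hasDerivAt_const t (1 : ℝ)).fun_div (hk.const_mul 2) h2k).fun_mul
    (he.fun_pow 2)).congr_deriv (by field_simp; ring)

end Derivatives

theorem stmt10_general (ξr' ξr'' ξbar : ℝ → Fin 2 → ℝ) (θ ω η1 : ℝ → ℝ)
    (k1 k2 k4 k6 δr εg : ℝ) (k3 k5 k5' k7 : ℝ → ℝ)
    (hk1 : 0 < k1) (hk2 : 0 < k2) (hk4 : 0 < k4) (hk6 : 0 < k6)
    (hδr : 0 < δr) (hεg : 0 < εg)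
    (hk3 : ∀ t, εg ≤ k3 t) (hk5 : ∀ t, εg ≤ k5 t) (hk7 : ∀ t, εg ≤ k7 t)
    (hk5' : ∀ t, HasDerivAt k5 (k5' t) t)
    (hξr' : ∀ t, HasDerivAt ξr' (ξr'' t) t)
    (hbound : ∀ t, δr ≤ enorm2 (ξr' t))
    (hθ : ∀ t, HasDerivAt θ (ω t) t)
    (hξbar : ∀ t, HasDerivAt ξbar
      (-(ω t) • Smat.mulVec (ξbar t) + η1 t • e1 - (Rmat (θ t))ᵀ.mulVec (ξr' t)) t)
    (η1d η1d' ωr ωd ωd' u1 u2bar : ℝ → ℝ)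
    (hη1d : ∀ t, η1d t = dot e1 ((Rmat (θ t))ᵀ.mulVec (ξr' t)) - k1 * ξbar t 0)
    (hωr : ∀ t, ωr t = -(dot (ξr' t) (Smat.mulVec (ξr'' t))) / (enorm2 (ξr' t)) ^ 2)
    (hωd : ∀ t, ωd t = ωr t - k2 * enorm2 (ξr' t) * ξbar t 1 +
      k3 t * enorm2 (ξr' t) * dot e2 ((Rmat (θ t))ᵀ.mulVec (ξr' t)))
    (hη1dDeriv : ∀ t, HasDerivAt η1d (η1d' t) t)
    (hωdDeriv : ∀ t, HasDerivAt ωd (ωd' t) t)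
    (hu1 : ∀ t, u1 t = η1d' t - k4 * ξbar t 0 - k6 * (η1 t - η1d t))
    (hu2 : ∀ t, u2bar t = ωd' t +
      (k5 t / k2) * dot e2 ((Rmat (θ t))ᵀ.mulVec (ξr' t)) / enorm2 (ξr' t) +
      (k5' t / (2 * k5 t) - k7 t) * (ω t - ωd t))
    (hη1 : ∀ t, HasDerivAt η1 (u1 t) t)
    (hω : ∀ t, HasDerivAt ω (u2bar t) t) :
    ∀ t,
      HasDerivAt
        (fun s => (1 / 2) * enorm2 (ξbar s) ^ 2 +
          (1 / k2) * (1 - dot e1 ((Rmat (θ s))ᵀ.mulVec (ξr' s)) / enorm2 (ξr' s)) +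
          (1 / (2 * k4)) * (η1 s - η1d s) ^ 2 +
          (1 / (2 * k5 s)) * (ω s - ωd s) ^ 2)
        (-k1 * (ξbar t 0) ^ 2 -
          (k3 t / k2) * (dot e2 ((Rmat (θ t))ᵀ.mulVec (ξr' t))) ^ 2 -
          (k6 / k4) * (η1 t - η1d t) ^ 2 -
          (k7 t / k5 t) * (ω t - ωd t) ^ 2) t ∧
      (-k1 * (ξbar t 0) ^ 2 -
          (k3 t / k2) * (dot e2 ((Rmat (θ t))ᵀ.mulVec (ξr' t))) ^ 2 -
          (k6 / k4) * (η1 t - η1d t) ^ 2 -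
          (k7 t / k5 t) * (ω t - ωd t) ^ 2) ≤ 0 := by
  intro t
  have hn : 0 < enorm2 (ξr' t) := hδr.trans_le (hbound t)
  have hk3t : 0 < k3 t := hεg.trans_le (hk3 t)
  have hk5t : 0 < k5 t := hεg.trans_le (hk5 t)
  have hk7t : 0 < k7 t := hεg.trans_le (hk7 t)
  have hL := ((((hasDerivAt_enorm2_sq (hξbar t)).const_mul (1 / 2)).fun_add
    (((hasDerivAt_dot_e1_rotT_mulVec_div_enorm2 (hθ t) (hξr' t) hn.ne').const_sub 1).const_mul
      (1 / k2))).fun_add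
    (hasDerivAt_one_div_two_mul_mul_sq (hasDerivAt_const t k4)
      ((hη1 t).fun_sub (hη1dDeriv t)) hk4.ne')).fun_add
    (hasDerivAt_one_div_two_mul_mul_sq (hk5' t) ((hω t).fun_sub (hωdDeriv t)) hk5t.ne')
  refine ⟨hL.congr_deriv ?_, ?_⟩
  · rw [dot_neg_smul_Smat_add_smul_e1_sub, hu1, hu2, hη1d, hωd, hωr]
    field_simp
    ring
  · have : 0 ≤ k1 * ξbar t 0 ^ 2 +
        k3 t / k2 * dot e2 ((Rmat (θ t))ᵀ *ᵥ ξr' t) ^ 2 +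
        k6 / k4 * (η1 t - η1d t) ^ 2 + k7 t / k5 t * (ω t - ωd t) ^ 2 := by positivity
    linarith

/-- With L = S + (1/(2k4))(η1 - η1d)² + (1/(2k5))(ω - ωd)²,
under the backstepping control law,
L̇ = -k1ξ̄1² - (k3/k2)(e2ᵀRᵀξr')² - (k6/k4)(η1 - η1d)² - (k7/k5)(ω - ωd)² ≤ 0. -/
theorem stmt10 (ξr ξr' ξr'' ξbar : ℝ → Fin 2 → ℝ) (θ ω η1 : ℝ → ℝ)
    (k1 k2 k4 k6 δr εg : ℝ) (k3 k5 k5' k7 : ℝ → ℝ)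
    (hk1 : 0 < k1) (hk2 : 0 < k2) (hk4 : 0 < k4) (hk6 : 0 < k6)
    (hδr : 0 < δr) (hεg : 0 < εg)
    (hk3 : ∀ t, εg ≤ k3 t) (hk5 : ∀ t, εg ≤ k5 t) (hk7 : ∀ t, εg ≤ k7 t)
    (hk5' : ∀ t, HasDerivAt k5 (k5' t) t)
    (hξr : ∀ t, HasDerivAt ξr (ξr' t) t)
    (hξr' : ∀ t, HasDerivAt ξr' (ξr'' t) t)
    (hbound : ∀ t, δr ≤ enorm2 (ξr' t))
    (hθ : ∀ t, HasDerivAt θ (ω t) t)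
    (hξbar : ∀ t, HasDerivAt ξbar
      (-(ω t) • Smat.mulVec (ξbar t) + η1 t • e1 - (Rmat (θ t))ᵀ.mulVec (ξr' t)) t)
    (η1d η1d' ωr ωd ωd' u1 u2bar : ℝ → ℝ)
    (hη1d : ∀ t, η1d t = dot e1 ((Rmat (θ t))ᵀ.mulVec (ξr' t)) - k1 * ξbar t 0)
    (hωr : ∀ t, ωr t = -(dot (ξr' t) (Smat.mulVec (ξr'' t))) / (enorm2 (ξr' t)) ^ 2)
    (hωd : ∀ t, ωd t = ωr t - k2 * enorm2 (ξr' t) * ξbar t 1 +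
      k3 t * enorm2 (ξr' t) * dot e2 ((Rmat (θ t))ᵀ.mulVec (ξr' t)))
    (hη1dDeriv : ∀ t, HasDerivAt η1d (η1d' t) t)
    (hωdDeriv : ∀ t, HasDerivAt ωd (ωd' t) t)
    (hu1 : ∀ t, u1 t = η1d' t - k4 * ξbar t 0 - k6 * (η1 t - η1d t))
    (hu2 : ∀ t, u2bar t = ωd' t +
      (k5 t / k2) * dot e2 ((Rmat (θ t))ᵀ.mulVec (ξr' t)) / enorm2 (ξr' t) +
      (k5' t / (2 * k5 t) - k7 t) * (ω t - ωd t))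
    (hη1 : ∀ t, HasDerivAt η1 (u1 t) t)
    (hω : ∀ t, HasDerivAt ω (u2bar t) t) :
    ∀ t,
      HasDerivAt
        (fun s => (1 / 2) * enorm2 (ξbar s) ^ 2 +
          (1 / k2) * (1 - dot e1 ((Rmat (θ s))ᵀ.mulVec (ξr' s)) / enorm2 (ξr' s)) +
          (1 / (2 * k4)) * (η1 s - η1d s) ^ 2 +
          (1 / (2 * k5 s)) * (ω s - ωd s) ^ 2)
        (-k1 * (ξbar t 0) ^ 2 -
          (k3 t / k2) * (dot e2 ((Rmat (θ t))ᵀ.mulVec (ξr' t))) ^ 2 -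
          (k6 / k4) * (η1 t - η1d t) ^ 2 -
          (k7 t / k5 t) * (ω t - ωd t) ^ 2) t ∧
      (-k1 * (ξbar t 0) ^ 2 -
          (k3 t / k2) * (dot e2 ((Rmat (θ t))ᵀ.mulVec (ξr' t))) ^ 2 -
          (k6 / k4) * (η1 t - η1d t) ^ 2 -
          (k7 t / k5 t) * (ω t - ωd t) ^ 2) ≤ 0 :=
  stmt10_general ξr' ξr'' ξbar θ ω η1 k1 k2 k4 k6 δr εg k3 k5 k5' k7 hk1 hk2 hk4 hk6 hδr hεg hk3 hk5
    hk7 hk5' hξr' hbound hθ hξbar η1d η1d' ωr ωd ωd' u1 u2bar hη1d hωr hωd hη1dDeriv hωdDeriv hu1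
    hu2 hη1 hω
end

section
/- (Barbalat's lemma) If f : [0,∞) → ℝ is differentiable, f(t) has a finite limit as t → ∞, and f' is uniformly continuous on [0,∞), then f'(t) → 0 as t → ∞. -/
/-!
Fix `ε > 0` and let `δ` be a modulus of uniform continuity of `f'` for `ε / 2`. For a step
`0 < h < δ`, the mean value inequality applied to `f - (· • f' t)` on `[t, t + h]` shows that the
increment `f (t + h) - f t` differs from `h • f' t` by at most `ε / 2 * h`, while the increment
itself tends to `0` because `f` converges. Hence `‖f' t‖ < ε` for all large `t`.
-/

open Set Filter Topology

theorem Convex.norm_image_sub_sub_smul_le_of_norm_hasDerivWithin_sub_le {𝕜 E : Type*} [RCLike 𝕜]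
    [NormedAddCommGroup E] [NormedSpace 𝕜 E] {f f' : 𝕜 → E} {s : Set 𝕜} {x y : 𝕜} {v : E}
    {C : ℝ} (hf : ∀ z ∈ s, HasDerivWithinAt f (f' z) s z) (bound : ∀ z ∈ s, ‖f' z - v‖ ≤ C)
    (hs : Convex ℝ s) (xs : x ∈ s) (ys : y ∈ s) :
    ‖f y - f x - (y - x) • v‖ ≤ C * ‖y - x‖ := by
  have hg : ∀ z ∈ s, HasDerivWithinAt (f - (· • v)) (f' z - v) s z := fun z hz ↦ by
    simpa only [id, one_smul] using (hf z hz).sub ((hasDerivWithinAt_id z s).smul_const v)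
  calc ‖f y - f x - (y - x) • v‖ = ‖(f y - y • v) - (f x - x • v)‖ := by
        rw [sub_smul]; congr 1; abel
    _ ≤ C * ‖y - x‖ := hs.norm_image_sub_le_of_norm_hasDerivWithin_le hg bound xs ys

theorem tendsto_zero_of_tendsto_of_uniformContinuousOn_deriv {E : Type*}
    [NormedAddCommGroup E] [NormedSpace ℝ E] {f f' : ℝ → E} {a : ℝ} {L : E}
    (hderiv : ∀ t ∈ Ici a, HasDerivWithinAt f (f' t) (Ici a) t)
    (hlim : Tendsto f atTop (𝓝 L)) (huc : UniformContinuousOn f' (Ici a)) :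
    Tendsto f' atTop (𝓝 0) := by
  rw [Metric.tendsto_nhds]
  intro ε hε
  obtain ⟨δ, hδ, hosc⟩ := Metric.uniformContinuousOn_iff.mp huc (ε / 2) (half_pos hε)
  obtain ⟨h, hh, hhδ⟩ := exists_between hδ
  have hincrement : Tendsto (fun t ↦ f (t + h) - f t) atTop (𝓝 0) := by
    simpa using (hlim.comp (tendsto_atTop_add_const_right _ h tendsto_id)).sub hlim
  have hsmall : ∀ᶠ t in atTop, ‖f (t + h) - f t‖ < ε / 2 * h := by
    simpa using Metric.tendsto_nhds.mp hincrement (ε / 2 * h) (by positivity)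
  filter_upwards [hsmall, eventually_ge_atTop a] with t hsmall_t hat
  have hlin : ‖f (t + h) - f t - h • f' t‖ ≤ ε / 2 * h := by
    have hIcc : Icc t (t + h) ⊆ Ici a := fun z hz ↦ hat.trans hz.1
    have hbound : ∀ z ∈ Icc t (t + h), ‖f' z - f' t‖ ≤ ε / 2 := fun z hz ↦ by
      refine (dist_eq_norm (f' z) (f' t) ▸ hosc z (hIcc hz) t hat ?_).le
      rw [Real.dist_eq, abs_of_nonneg (by linarith [hz.1])]
      linarith [hz.2]
    simpa [abs_of_pos hh] using
      (convex_Icc t (t + h)).norm_image_sub_sub_smul_le_of_norm_hasDerivWithin_sub_le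
        (fun z hz ↦ (hderiv z (hIcc hz)).mono hIcc) hbound
        (left_mem_Icc.mpr (by linarith)) (right_mem_Icc.mpr (by linarith))
  have key : h * ‖f' t‖ < h * ε := calc
    h * ‖f' t‖ = ‖h • f' t‖ := by rw [norm_smul, Real.norm_of_nonneg hh.le]
    _ ≤ ‖h • f' t - (f (t + h) - f t)‖ + ‖f (t + h) - f t‖ := norm_le_norm_sub_add _ _
    _ = ‖f (t + h) - f t - h • f' t‖ + ‖f (t + h) - f t‖ := by rw [norm_sub_rev]
    _ < h * ε := by linarith
  simpa using lt_of_mul_lt_mul_left key hh.le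

/-- Barbalat's lemma: If f : [0,∞) → ℝ is differentiable,
f(t) has a finite limit as t → ∞, and f' is uniformly continuous on [0,∞),
then f'(t) → 0 as t → ∞. -/
theorem stmt11 (f f' : ℝ → ℝ) (L : ℝ)
    (hderiv : ∀ t ∈ Set.Ici (0 : ℝ), HasDerivWithinAt f (f' t) (Set.Ici 0) t)
    (hlim : Filter.Tendsto f Filter.atTop (nhds L))
    (huc : UniformContinuousOn f' (Set.Ici 0)) :
    Filter.Tendsto f' Filter.atTop (nhds 0) :=
  tendsto_zero_of_tendsto_of_uniformContinuousOn_deriv hderiv hlim huc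
end

section
/- The 3x3 matrix A2 = [[0, s, 0], [-k2·s, -k3·s², 1], [0, -k5/k2, -k7]] with s > 0 and k2, k3, k5, k7 > 0 is Hurwitz provided (k3s² + k7)(k3k7s² + k5/k2 + k2s²) > s²k2k7. -/
/-! The characteristic polynomial of `A2` is `λ³ + aλ² + bλ + c` with `a = k3s² + k7`,
`b = k3k7s² + k5/k2 + k2s²`, `c = s²k2k7`, all positive, so the hypothesis is the Routh–Hurwitz
condition `ab > c`. For that criterion: if `z = x + iy` with `x ≥ 0` were a root, the imaginary
part forces `y = 0` or `y² = 3x² + 2ax + b`. In the first case the real part is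
`x³ + ax² + bx + c > 0`; in the second, substituting `y²` turns it into
`-8x³ - 8ax² - 2(a² + b)x + (c - ab) < 0`. -/

open Polynomial

noncomputable def A2mat (s k2 k3 k5 k7 : ℝ) : Matrix (Fin 3) (Fin 3) ℝ :=
  !![0, s, 0; -k2 * s, -k3 * s ^ 2, 1; 0, -k5 / k2, -k7]

namespace Complex

lemma re_cubic (a b c : ℝ) (z : ℂ) :
    (z ^ 3 + a * z ^ 2 + b * z + c).re =
      z.re ^ 3 - 3 * z.re * z.im ^ 2 + a * (z.re ^ 2 - z.im ^ 2) + b * z.re + c := by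
  simp only [pow_succ, pow_zero, one_mul, add_re, mul_re, mul_im, ofReal_re, ofReal_im]
  ring

lemma im_cubic (a b c : ℝ) (z : ℂ) :
    (z ^ 3 + a * z ^ 2 + b * z + c).im =
      z.im * (3 * z.re ^ 2 - z.im ^ 2 + 2 * a * z.re + b) := by
  simp only [pow_succ, pow_zero, one_mul, add_im, mul_re, mul_im, ofReal_re, ofReal_im]
  ring

theorem re_neg_of_cubic_eq_zero {a b c : ℝ} (ha : 0 < a) (hb : 0 < b) (hc : 0 < c)
    (hab : c < a * b) {z : ℂ} (hz : z ^ 3 + a * z ^ 2 + b * z + c = 0) : z.re < 0 := by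
  by_contra! hx
  have hre := re_cubic a b c z
  have him := im_cubic a b c z
  rw [hz, zero_re] at hre
  rw [hz, zero_im, eq_comm, mul_eq_zero] at him
  rcases him with hy | hy
  · rw [hy] at hre
    nlinarith [pow_nonneg hx 3, mul_nonneg ha.le (pow_nonneg hx 2), mul_nonneg hb.le hx]
  · have hy2 : z.im ^ 2 = 3 * z.re ^ 2 + 2 * a * z.re + b := by linarith
    rw [hy2] at hre
    nlinarith [pow_nonneg hx 3, mul_nonneg ha.le (pow_nonneg hx 2),
      mul_nonneg (add_pos (sq_pos_of_pos ha) hb).le hx]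

end Complex

lemma A2mat_charpoly (s k2 k3 k5 k7 : ℝ) :
    (A2mat s k2 k3 k5 k7).charpoly =
      X ^ 3 + C (k3 * s ^ 2 + k7) * X ^ 2
        + C (k3 * k7 * s ^ 2 + k5 / k2 + k2 * s ^ 2) * X + C (s ^ 2 * k2 * k7) := by
  rw [Matrix.charpoly, Matrix.det_fin_three]
  simp [A2mat, neg_div]
  ring

/-- With s > 0 and k2, k3, k5, k7 > 0, A2 is Hurwitz provided
(k3s² + k7)(k3k7s² + k5/k2 + k2s²) > s²k2k7. -/
theorem stmt16 (s k2 k3 k5 k7 : ℝ) (hs : 0 < s)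
    (hk2 : 0 < k2) (hk3 : 0 < k3) (hk5 : 0 < k5) (hk7 : 0 < k7)
    (hRH : (k3 * s ^ 2 + k7) * (k3 * k7 * s ^ 2 + k5 / k2 + k2 * s ^ 2) >
      s ^ 2 * k2 * k7) :
    ∀ z : ℂ, Polynomial.aeval z
      (((A2mat s k2 k3 k5 k7).charpoly).map (algebraMap ℝ ℂ)) = 0 → z.re < 0 := by
  intro z hz
  rw [aeval_map_algebraMap, A2mat_charpoly] at hz
  simp only [map_add, map_mul, map_pow, aeval_X, aeval_C, Complex.coe_algebraMap] at hz
  exact Complex.re_neg_of_cubic_eq_zero (by positivity) (by positivity) (by positivity) hRH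
    (by exact_mod_cast hz)
end
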